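/- Let Σ be a finite alphabet and w, w̃ ∈ Σ* with ι(w) = ι(w̃) = 1 such that alph(α₀) = alph(α₁) = alph(α̃₀) = alph(α̃₁) is a subset of Σ of cardinality |Σ| − 1. Then w ∼_k w̃ if and only if α₀ ∼_{k−1} α̃₀ and α₁ ∼_{k−1} α̃₁. -/

import Mathlib

open List

variable {α : Type*} [DecidableEq α] [Fintype α]

/-- Simon `k`-congruence: `u` and `v` have the same scattered factors
(subsequences) of length at most `k`. -/
def SimonCongr (k : ℕ) (u v : List α) : Prop :=
  ∀ s : List α, s.length ≤ k → (s.Sublist u ↔ s.Sublist v)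

/-- `w` is `k`-universal with respect to the alphabet `S`: every word of length `k`
over `S` is a scattered factor of `w`. -/
def UniversalOn (S : Finset α) (k : ℕ) (w : List α) : Prop :=
  ∀ s : List α, s.length = k → (∀ x ∈ s, x ∈ S) → s.Sublist w

/-- The universality index of `w` w.r.t. the alphabet `S`. -/
noncomputable def iotaOn (S : Finset α) (w : List α) : ℕ :=
  sSup {k | UniversalOn S k w}

/-- The universality index of `w` w.r.t. the full alphabet. -/
noncomputable def iotaUniv (w : List α) : ℕ := iotaOn Finset.univ w

/-- `a` is an arch w.r.t. `S`: it contains every letter of `S`, and its last letter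
belongs to `S` and occurs exactly once in `a`. -/
def IsArchOn (S : Finset α) (a : List α) : Prop :=
  (∀ x ∈ S, x ∈ a) ∧ ∃ a' x, a = a' ++ [x] ∧ x ∈ S ∧ x ∉ a'

/-- `(ars, r)` is the arch factorization of `w` w.r.t. `S`. -/
def IsArchFactOn (S : Finset α) (w : List α) (ars : List (List α)) (r : List α) : Prop :=
  w = ars.flatten ++ r ∧ (∀ a ∈ ars, IsArchOn S a) ∧ ¬ (∀ x ∈ S, x ∈ r)

/-- `(A, B)` is the α-β-factorization of `w` with `m` arches:
`αᵢ₋₁βᵢ` (for `i ∈ [m]`) together with rest `α_m` is the arch factorization of `w`, and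
`(β_{m-i}α_{m-i})^R` together with rest `α₀^R` is the arch factorization of `w^R`. -/
def IsAlphaBetaFact (w : List α) (m : ℕ) (A B : ℕ → List α) : Prop :=
  IsArchFactOn Finset.univ w (List.ofFn fun i : Fin m => A i.val ++ B (i.val + 1)) (A m) ∧
  IsArchFactOn Finset.univ w.reverse
    (List.ofFn fun i : Fin m => (B (m - i.val) ++ A (m - i.val)).reverse) ((A 0).reverse)

/-- The concatenation `αᵢ βᵢ₊₁ αᵢ₊₁ ⋯ βⱼ αⱼ`. -/
def abSeg (A B : ℕ → List α) (i j : ℕ) : List α :=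
  A i ++ (((List.Ico (i + 1) (j + 1)).map fun l => B l ++ A l).flatten)

/-- The core of a `β`-factor: the factor with its first and last letter removed. -/
def coreOf (b : List α) : List α := (b.drop 1).dropLast

/-! Both arches of `w` end, resp. begin, inside `β₁` with the one letter `x` missing from the
`α`-factors, so `β₁ = x` and `w = α₀ x α₁` contains `x` exactly once. Then `s ↦ s x` and
`s ↦ x s` transfer `k`-congruence of the words to `(k-1)`-congruence of the `α`-factors.
Conversely, a scattered factor of length `≤ k` of `α₀ x α₁` either uses `x` and splits as
`s₁ x s₂` with `|s₁|, |s₂| ≤ k - 1`, or avoids `x` and can be matched across both `α`-factors,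
each of which contains every letter but `x`. -/

section Sublist

omit [DecidableEq α] [Fintype α]

variable {x : α} {s u v : List α}

theorem List.cons_sublist_append_cons_iff (hu : x ∉ u) :
    x :: s <+ u ++ x :: v ↔ s <+ v := by
  induction u with
  | nil => exact cons_sublist_cons
  | cons a u ih =>
    rw [cons_append, sublist_cons_iff, ih fun h => hu (mem_cons_of_mem a h)]
    refine ⟨?_, Or.inl⟩
    rintro (h | ⟨r, hr, -⟩)
    · exact h
    · exact absurd (mem_cons_self ..) ((cons.inj hr).1 ▸ hu)

theorem List.append_singleton_sublist_append_cons_iff (hv : x ∉ v) :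
    s ++ [x] <+ u ++ x :: v ↔ s <+ u := by
  rw [← reverse_sublist, ← reverse_sublist (l₁ := s)]
  simpa using cons_sublist_append_cons_iff (s := s.reverse) (u := v.reverse) (v := u.reverse)
    (by simpa using hv)

theorem List.sublist_append_of_dropLast_sublist (hs : s ≠ []) (h : s.dropLast <+ u)
    (hlast : s.getLast hs ∈ v) : s <+ u ++ v :=
  dropLast_append_getLast hs ▸ h.append (singleton_sublist.mpr hlast)

theorem List.sublist_append_of_tail_sublist (hs : s ≠ []) (hhead : s.head hs ∈ u)
    (h : s.tail <+ v) : s <+ u ++ v :=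
  cons_head_tail hs ▸ (singleton_sublist.mpr hhead).append h

end Sublist

section Arch

omit [DecidableEq α]

variable {x : α} {u b v : List α}

theorem IsArchOn.exists_eq_append_singleton (h : IsArchOn Finset.univ (u ++ b))
    (hu : ∀ y, y ∈ u ↔ y ≠ x) : ∃ b', b = b' ++ [x] ∧ x ∉ b' := by
  obtain ⟨hall, a', z, heq, -, hz⟩ := h
  rcases b.eq_nil_or_concat with rfl | ⟨b', y, rfl⟩
  · exact ((hu x).mp (by simpa using hall x (Finset.mem_univ x)) rfl).elim
  · rw [concat_eq_append, ← append_assoc] at heq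
    obtain ⟨rfl, hyz⟩ := append_inj' heq rfl
    obtain rfl : y = z := by simpa using hyz
    rw [mem_append, not_or, hu, not_not] at hz
    obtain ⟨rfl, hx⟩ := hz
    exact ⟨b', concat_eq_append .., hx⟩

theorem eq_singleton_of_isArchOn_of_isArchOn_reverse (h : IsArchOn Finset.univ (u ++ b))
    (hrev : IsArchOn Finset.univ ((b ++ v).reverse))
    (hu : ∀ y, y ∈ u ↔ y ≠ x) (hv : ∀ y, y ∈ v ↔ y ≠ x) : b = [x] := by
  obtain ⟨b', rfl, hxb'⟩ := h.exists_eq_append_singleton hu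
  rw [reverse_append] at hrev
  obtain ⟨c, hc, -⟩ := hrev.exists_eq_append_singleton (by simpa using hv)
  cases b' with
  | nil => rfl
  | cons y b' =>
    obtain ⟨-, hyx⟩ := append_inj' (by simpa using hc : (x :: b'.reverse) ++ [y] = c ++ [x]) rfl
    obtain rfl : y = x := by simpa using hyx
    exact (hxb' mem_cons_self).elim

theorem IsAlphaBetaFact.one {w : List α} {A B : ℕ → List α} (h : IsAlphaBetaFact w 1 A B) :
    w = A 0 ++ B 1 ++ A 1 ∧ IsArchOn Finset.univ (A 0 ++ B 1) ∧
      IsArchOn Finset.univ ((B 1 ++ A 1).reverse) := by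
  obtain ⟨⟨hw, harch, -⟩, -, hrev, -⟩ := h
  simp only [Fin.val_eq_zero, zero_add, ofFn_succ, ofFn_zero, flatten_cons, flatten_nil, append_nil,
    mem_cons, not_mem_nil, or_false, forall_eq, tsub_zero] at hw harch hrev
  exact ⟨hw, harch, hrev⟩

end Arch

section Congr

omit [DecidableEq α] [Fintype α]

variable {k : ℕ} {x : α} {u v u' v' : List α}

namespace SimonCongr

theorem symm (h : SimonCongr k u v) : SimonCongr k v u := fun s hs => (h s hs).symm

theorem left_of_succ_append_cons (hv : x ∉ v) (hv' : x ∉ v')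
    (h : SimonCongr (k + 1) (u ++ x :: v) (u' ++ x :: v')) : SimonCongr k u u' := fun s hs => by
  rw [← append_singleton_sublist_append_cons_iff hv, h _ (by simpa using hs),
    append_singleton_sublist_append_cons_iff hv']

theorem right_of_succ_append_cons (hu : x ∉ u) (hu' : x ∉ u')
    (h : SimonCongr (k + 1) (u ++ x :: v) (u' ++ x :: v')) : SimonCongr k v v' := fun s hs => by
  rw [← cons_sublist_append_cons_iff hu, h _ (by simpa using hs), cons_sublist_append_cons_iff hu']

theorem sublist_append_cons (Hu : SimonCongr k u u') (Hv : SimonCongr k v v')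
    (hu : x ∉ u) (hv : x ∉ v) (hu' : ∀ y, y ≠ x → y ∈ u') (hv' : ∀ y, y ≠ x → y ∈ v')
    {s : List α} (hs : s.length ≤ k + 1) (h : s <+ u ++ x :: v) : s <+ u' ++ x :: v' := by
  obtain ⟨s₁, s₂, rfl, h₁, h₂⟩ := sublist_append_iff.mp h
  rw [length_append] at hs
  rcases sublist_cons_iff.mp h₂ with h₂ | ⟨r, rfl, hr⟩
  · -- If one part of `s` has length `k + 1`, the other is empty, and the extreme letter of the
    -- long part, being different from `x`, also occurs in the opposite factor.
    by_cases hs₁ : s₁.length ≤ k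
    · by_cases hs₂ : s₂.length ≤ k
      · exact ((Hu s₁ hs₁).mp h₁).append (((Hv s₂ hs₂).mp h₂).trans (sublist_cons_self x v'))
      obtain rfl : s₁ = [] := length_eq_zero_iff.mp (by omega)
      have hne : s₂ ≠ [] := ne_nil_of_length_pos (by omega)
      have hhead : s₂.head hne ∈ u' := hu' _ fun he => hv (he ▸ h₂.subset (head_mem hne))
      have htail : s₂.tail <+ v' := (Hv _ (by simp; omega)).mp ((tail_sublist s₂).trans h₂)
      exact sublist_append_of_tail_sublist hne hhead (htail.trans (sublist_cons_self x v'))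
    obtain rfl : s₂ = [] := length_eq_zero_iff.mp (by omega)
    have hne : s₁ ≠ [] := ne_nil_of_length_pos (by omega)
    have hinit : s₁.dropLast <+ u' := (Hu _ (by simp; omega)).mp ((dropLast_sublist s₁).trans h₁)
    have hlast : s₁.getLast hne ∈ v' := hv' _ fun he => hu (he ▸ h₁.subset (getLast_mem hne))
    exact (append_nil s₁).symm ▸
      sublist_append_of_dropLast_sublist hne hinit (mem_cons_of_mem x hlast)
  · rw [length_cons] at hs
    exact ((Hu s₁ (by omega)).mp h₁).append (cons_sublist_cons.mpr ((Hv r (by omega)).mp hr))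

end SimonCongr

theorem simonCongr_succ_append_cons_iff (hu : ∀ y, y ∈ u ↔ y ≠ x) (hv : ∀ y, y ∈ v ↔ y ≠ x)
    (hu' : ∀ y, y ∈ u' ↔ y ≠ x) (hv' : ∀ y, y ∈ v' ↔ y ≠ x) :
    SimonCongr (k + 1) (u ++ x :: v) (u' ++ x :: v') ↔
      SimonCongr k u u' ∧ SimonCongr k v v' := by
  have hx {l : List α} (hl : ∀ y, y ∈ l ↔ y ≠ x) : x ∉ l := fun h => (hl x).mp h rfl
  refine ⟨fun h => ⟨h.left_of_succ_append_cons (hx hv) (hx hv'),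
    h.right_of_succ_append_cons (hx hu) (hx hu')⟩, fun ⟨Hu, Hv⟩ s hs => ⟨?_, ?_⟩⟩
  · exact Hu.sublist_append_cons Hv (hx hu) (hx hv) (fun y => (hu' y).mpr) (fun y => (hv' y).mpr) hs
  · exact Hu.symm.sublist_append_cons Hv.symm (hx hu') (hx hv') (fun y => (hu y).mpr)
      (fun y => (hv y).mpr) hs

end Congr

theorem Finset.exists_eq_compl_singleton_of_card_eq [Nonempty α] {s : Finset α}
    (h : s.card = Fintype.card α - 1) : ∃ x, s = {x}ᶜ := by
  have hcompl : sᶜ.card = 1 := by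
    have := Fintype.card_pos (α := α)
    rw [card_compl, h]
    omega
  obtain ⟨x, hx⟩ := card_eq_one.mp hcompl
  exact ⟨x, (compl_eq_comm.mp hx).symm⟩

theorem simonCongr_alpha_same_coalphabet_general (k : ℕ) (hk : 1 ≤ k)
    (w w' : List α) (A B A' B' : ℕ → List α)
    (hw : IsAlphaBetaFact w 1 A B) (hw' : IsAlphaBetaFact w' 1 A' B')
    (h01 : (A 0).toFinset = (A 1).toFinset)
    (h01' : (A 1).toFinset = (A' 0).toFinset)
    (h01'' : (A' 0).toFinset = (A' 1).toFinset)
    (hcard : (A 0).toFinset.card = Fintype.card α - 1) :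
    SimonCongr k w w' ↔
      (SimonCongr (k - 1) (A 0) (A' 0) ∧ SimonCongr (k - 1) (A 1) (A' 1)) := by
  obtain ⟨k, rfl⟩ := Nat.exists_eq_add_of_le' hk
  obtain ⟨rfl, harch, hrev⟩ := hw.one
  obtain ⟨rfl, harch', hrev'⟩ := hw'.one
  obtain ⟨-, z, -⟩ := harch.2
  have : Nonempty α := ⟨z⟩
  obtain ⟨x, hx⟩ := Finset.exists_eq_compl_singleton_of_card_eq hcard
  have coalph {l : List α} (hl : l.toFinset = {x}ᶜ) (y : α) : y ∈ l ↔ y ≠ x := by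
    rw [← mem_toFinset, hl, Finset.mem_compl, Finset.mem_singleton]
  have h0 := coalph hx
  have h1 := coalph (h01 ▸ hx)
  have h0' := coalph (h01' ▸ h01 ▸ hx)
  have h1' := coalph (h01'' ▸ h01' ▸ h01 ▸ hx)
  rw [eq_singleton_of_isArchOn_of_isArchOn_reverse harch hrev h0 h1,
    eq_singleton_of_isArchOn_of_isArchOn_reverse harch' hrev' h0' h1']
  simpa using simonCongr_succ_append_cons_iff h0 h1 h0' h1'

/-- `1`-universal words whose four `α`-factors all have the same
alphabet of size `|Σ| − 1` are `k`-congruent iff corresponding `α`-factors are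
`(k−1)`-congruent. -/
theorem simonCongr_alpha_same_coalphabet (k : ℕ) (hk : 1 ≤ k)
    (w w' : List α) (A B A' B' : ℕ → List α)
    (hw : IsAlphaBetaFact w 1 A B) (hw' : IsAlphaBetaFact w' 1 A' B')
    (hiw : iotaUniv w = 1) (hiw' : iotaUniv w' = 1)
    (h01 : (A 0).toFinset = (A 1).toFinset)
    (h01' : (A 1).toFinset = (A' 0).toFinset)
    (h01'' : (A' 0).toFinset = (A' 1).toFinset)
    (hcard : (A 0).toFinset.card = Fintype.card α - 1) :
    SimonCongr k w w' ↔
      (SimonCongr (k - 1) (A 0) (A' 0) ∧ SimonCongr (k - 1) (A 1) (A' 1)) :=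
  simonCongr_alpha_same_coalphabet_general k hk w w' A B A' B' hw hw' h01 h01' h01'' hcard
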